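/- arXiv:2307.08787 — 2 statements merged into one kernel-verified Lean document; each statement's English description precedes it below -/
import Mathlib

section
/- Let p > 2 be a prime and let N be a pro-p group containing a closed normal subgroup K with K isomorphic to ℤ_p and N/K isomorphic to ℤ_p. If N contains a nontrivial closed normal subgroup K₁ with K₁ ∩ K = 1, then N is isomorphic (as a topological group) to ℤ_p × ℤ_p. -/
open Subgroup

universe u

/-- A pro-`p` group: compact, Hausdorff, totally disconnected topological group in which
every open normal subgroup has index a power of `p`. -/
def IsProP (p : ℕ) (G : Type u) [Group G] [TopologicalSpace G] : Prop :=
  CompactSpace G ∧ T2Space G ∧ TotallyDisconnectedSpace G ∧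
    ∀ U : Subgroup G, U.Normal → IsOpen (U : Set G) → ∃ n : ℕ, U.index = p ^ n

/-- Topologically isomorphic to the (additive) group `ℤ_p` of `p`-adic integers. -/
def IsTopIsoZp (p : ℕ) [Fact p.Prime] (H : Type*) [Group H] [TopologicalSpace H] : Prop :=
  ∃ e : H ≃* Multiplicative ℤ_[p], Continuous e ∧ Continuous e.symm

/-- Topologically isomorphic to `ℤ_p × ℤ_p`. -/
def IsTopIsoZpxZp (p : ℕ) [Fact p.Prime] (H : Type*) [Group H] [TopologicalSpace H] : Prop :=
  ∃ e : H ≃* Multiplicative ℤ_[p] × Multiplicative ℤ_[p], Continuous e ∧ Continuous e.symm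

/-- The closed subgroup topologically generated by one element. -/
def topGenBy {G : Type u} [Group G] [TopologicalSpace G] [IsTopologicalGroup G] (x : G) :
    Subgroup G :=
  (Subgroup.closure {x}).topologicalClosure

/-- Topologically finitely generated. -/
def TopFiniteGen (G : Type u) [Group G] [TopologicalSpace G] [IsTopologicalGroup G] : Prop :=
  ∃ S : Finset G, (Subgroup.closure (S : Set G)).topologicalClosure = ⊤

/-- Topologically procyclic: topologically generated by a single element. -/
def Procyclic (G : Type u) [Group G] [TopologicalSpace G] [IsTopologicalGroup G] : Prop :=
  ∃ x : G, topGenBy x = ⊤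

/-- `G` splits as a proper amalgamated free pro-`p` product `G = A ⨿_C B`:
`A`, `B` are closed subgroups with `A ⊓ B = C`, `G` is topologically generated by `A ∪ B`,
and the universal property for pairs of continuous homomorphisms into pro-`p` groups
agreeing on `C` holds. -/
def IsAmalgFreeProdP (p : ℕ) (G : Type u) [Group G] [TopologicalSpace G] [IsTopologicalGroup G]
    (A B C : Subgroup G) : Prop :=
  IsClosed (A : Set G) ∧ IsClosed (B : Set G) ∧ A ⊓ B = C ∧
    (A ⊔ B).topologicalClosure = ⊤ ∧
    ∀ (K : Type u) [Group K] [TopologicalSpace K] [IsTopologicalGroup K],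
      IsProP p K →
      ∀ (ψ₁ : A →* K) (ψ₂ : B →* K), Continuous ψ₁ → Continuous ψ₂ →
        (∀ (x : G) (hA : x ∈ A) (hB : x ∈ B), ψ₁ ⟨x, hA⟩ = ψ₂ ⟨x, hB⟩) →
        ∃! φ : G →* K, Continuous φ ∧ (∀ a : A, φ a = ψ₁ a) ∧ (∀ b : B, φ b = ψ₂ b)

/-- `G` splits as a proper pro-`p` HNN-extension `G = HNN(A, C, t)`:
`A` is a closed subgroup, `C ≤ A` closed with `t⁻¹Ct ≤ A`, `G` is topologically generated
by `A ∪ {t}`, and the universal property holds. -/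
def IsHNNProP (p : ℕ) (G : Type u) [Group G] [TopologicalSpace G] [IsTopologicalGroup G]
    (A C : Subgroup G) (t : G) : Prop :=
  IsClosed (A : Set G) ∧ IsClosed (C : Set G) ∧ C ≤ A ∧ (∀ c ∈ C, t⁻¹ * c * t ∈ A) ∧
    (A ⊔ Subgroup.closure {t}).topologicalClosure = ⊤ ∧
    ∀ (K : Type u) [Group K] [TopologicalSpace K] [IsTopologicalGroup K],
      IsProP p K →
      ∀ (ψ : A →* K) (k : K), Continuous ψ →
        (∀ (c : G) (hcC : c ∈ C) (hcA : c ∈ A) (hct : t⁻¹ * c * t ∈ A),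
          k⁻¹ * ψ ⟨c, hcA⟩ * k = ψ ⟨t⁻¹ * c * t, hct⟩) →
        ∃! ω : G →* K, Continuous ω ∧ (∀ a : A, ω a = ψ a) ∧ ω t = k

/-- `G` does not split as a nontrivial free pro-`p` product (= proper amalgamated
free pro-`p` product over the trivial subgroup with both factors nontrivial). -/
def FreeIndecomposable (p : ℕ) (G : Type u) [Group G] [TopologicalSpace G]
    [IsTopologicalGroup G] : Prop :=
  ¬ ∃ A B : Subgroup G, IsAmalgFreeProdP p G A B ⊥ ∧ A ≠ ⊥ ∧ B ≠ ⊥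

/-- The conjugate subgroup `C^t = t⁻¹ C t`. -/
def conjSub {G : Type u} [Group G] (t : G) (C : Subgroup G) : Subgroup G :=
  C.map (MulAut.conj t⁻¹).toMonoidHom

/-- The data of a splitting of `G`: an amalgamated free product `A ⨿_C B`
or an HNN-extension `HNN(A, C, t)`. -/
inductive SplitData (G : Type u) [Group G] : Type u
  | amalg : Subgroup G → Subgroup G → Subgroup G → SplitData G
  | hnn : Subgroup G → Subgroup G → G → SplitData G

namespace SplitData

variable {G : Type u} [Group G]

/-- The amalgamated (resp. associated) subgroup of a splitting. -/
def C : SplitData G → Subgroup G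
  | amalg _ _ C => C
  | hnn _ C _ => C

/-- `g` is elliptic: some conjugate of `g` lies in `A ∪ B` (resp. in `A`). -/
def Elliptic : SplitData G → G → Prop
  | amalg A B _, g => ∃ h : G, h⁻¹ * g * h ∈ A ∨ h⁻¹ * g * h ∈ B
  | hnn A _ _, g => ∃ h : G, h⁻¹ * g * h ∈ A

/-- `g` is hyperbolic: not elliptic. -/
def Hyperbolic (S : SplitData G) (g : G) : Prop := ¬ S.Elliptic g

/-- The splitting is an HNN-extension (not an amalgam). -/
def IsHNNCase : SplitData G → Prop
  | amalg _ _ _ => False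
  | hnn _ _ _ => True

variable [TopologicalSpace G] [IsTopologicalGroup G]

/-- The data is a genuine `ℤ_p`-splitting of `G`: a proper non-fictitious amalgamated free
pro-`p` product, or a proper pro-`p` HNN-extension, over a subgroup `C ≅ ℤ_p`. -/
def IsZp (p : ℕ) [Fact p.Prime] : SplitData G → Prop
  | amalg A B C => IsAmalgFreeProdP p G A B C ∧ C ≠ A ∧ C ≠ B ∧ IsTopIsoZp p ↥C
  | hnn A C t => IsHNNProP p G A C t ∧ IsTopIsoZp p ↥C

end SplitData

/-- Two splittings form a hyperbolic-hyperbolic pair: every topological generator of `C₁`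
is hyperbolic with respect to the second splitting and vice versa. -/
def HypHypPair {G : Type u} [Group G] [TopologicalSpace G] [IsTopologicalGroup G]
    (S₁ S₂ : SplitData G) : Prop :=
  (∀ c : G, topGenBy c = S₁.C → S₂.Hyperbolic c) ∧
  (∀ c : G, topGenBy c = S₂.C → S₁.Hyperbolic c)

/-- `H` is malnormal in the subgroup `K` (both subgroups of an ambient group). -/
def MalnormalIn {G : Type u} [Group G] (H K : Subgroup G) : Prop :=
  ∀ k ∈ K, k ∉ H → ∀ x ∈ H, k⁻¹ * x * k ∈ H → x = 1

/-- The malnormality conclusion for a splitting: `C` is malnormal in `A` or `B`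
(resp. `C` or `C^t` is malnormal in `A`). -/
def SplitData.MalnormalConcl {G : Type u} [Group G] : SplitData G → Prop
  | .amalg A B C => MalnormalIn C A ∨ MalnormalIn C B
  | .hnn A C t => MalnormalIn C A ∨ MalnormalIn (conjSub t C) A

/-- The 2-acylindricity of the action on the standard pro-`p` tree, spelled out through
edge stabilizers: no nontrivial element fixes three consecutive edges. -/
def SplitData.TwoAcylConcl {G : Type u} [Group G] : SplitData G → Prop
  | .amalg A B C => ∀ a ∈ A, a ∉ C → ∀ b ∈ B, b ∉ C →
      ∀ g ∈ C, a⁻¹ * g * a ∈ C → b⁻¹ * g * b ∈ C → g = 1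
  | .hnn A C t => ∀ x : G, (x ∈ A ∨ x * t ∈ A) → x ∉ C →
      ∀ y : G, (t⁻¹ * y ∈ A ∨ t⁻¹ * y * t ∈ A) → y ∉ C →
      x⁻¹ * y ∉ C →
      ∀ g ∈ C, x⁻¹ * g * x ∈ C → y⁻¹ * g * y ∈ C → g = 1

/-- The pro-2 Klein bottle `ℤ₂ ⋊ ℤ₂` (action by inversion through `ℤ₂/2ℤ₂`), characterized
internally. -/
def IsProKleinBottle (N : Type*) [Group N] [TopologicalSpace N] [IsTopologicalGroup N] : Prop :=
  ∃ a t : N, t⁻¹ * a * t = a⁻¹ ∧ (topGenBy a).Normal ∧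
    IsTopIsoZp 2 ↥(topGenBy a) ∧ IsTopIsoZp 2 ↥(topGenBy t) ∧
    topGenBy a ⊓ topGenBy t = ⊥ ∧ (topGenBy a ⊔ topGenBy t).topologicalClosure = ⊤

/-- The infinite dihedral pro-2 group `ℤ₂ ⋊ ℤ/2ℤ` (with inversion), characterized
internally. -/
def IsInfDihedralPro2 (N : Type*) [Group N] [TopologicalSpace N] [IsTopologicalGroup N] : Prop :=
  ∃ a s : N, s * s = 1 ∧ s ≠ 1 ∧ s⁻¹ * a * s = a⁻¹ ∧ (topGenBy a).Normal ∧
    IsTopIsoZp 2 ↥(topGenBy a) ∧ s ∉ topGenBy a ∧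
    (topGenBy a ⊔ topGenBy s).topologicalClosure = ⊤

/-- `(ℤ₂ × ℤ₂) ⋊ ℤ/2ℤ` with `ℤ/2ℤ` acting by inversion, characterized internally. -/
def IsZ2xZ2ByInversion (N : Type*) [Group N] [TopologicalSpace N] [IsTopologicalGroup N] : Prop :=
  ∃ (M : Subgroup N) (s : N), IsClosed (M : Set N) ∧ M.Normal ∧ IsTopIsoZpxZp 2 ↥M ∧
    s * s = 1 ∧ s ∉ M ∧ (∀ m ∈ M, s⁻¹ * m * s = m⁻¹) ∧
    (M ⊔ topGenBy s).topologicalClosure = ⊤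

/-- A semidirect product `(ℤ₂ ⋊ ℤ₂) ⋊ ℤ/2ℤ` of the pro-2 Klein bottle and a group of
order 2, characterized internally. -/
def IsKleinByC2 (N : Type*) [Group N] [TopologicalSpace N] [IsTopologicalGroup N] : Prop :=
  ∃ (M : Subgroup N) (s : N), IsClosed (M : Set N) ∧ M.Normal ∧ IsProKleinBottle ↥M ∧
    s * s = 1 ∧ s ∉ M ∧ (M ⊔ topGenBy s).topologicalClosure = ⊤

/-- `G` splits, as a proper non-fictitious amalgamated free pro-`p` product or a proper
pro-`p` HNN-extension, over a subgroup of order at most 2. -/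
def SplitsOverSmall (p : ℕ) (G : Type u) [Group G] [TopologicalSpace G]
    [IsTopologicalGroup G] : Prop :=
  ∃ H : Subgroup G, Nat.card H ≤ 2 ∧
    ((∃ G₁ G₂ : Subgroup G, IsAmalgFreeProdP p G G₁ G₂ H ∧ H ≠ G₁ ∧ H ≠ G₂) ∨
     (∃ (A : Subgroup G) (t : G), IsHNNProP p G A H t))

/-- `X` is contained in some conjugate of `Y`. -/
def InConjOf {G : Type u} [Group G] (X Y : Subgroup G) : Prop :=
  ∃ g : G, ∀ x ∈ X, g * x * g⁻¹ ∈ Y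

/-- The base factors of the splitting (both `A` and `B` in the amalgam case, `A` in the
HNN case) are each contained in conjugates of subgroups satisfying `P`. -/
def SplitData.BaseConjInto {G : Type u} [Group G] : SplitData G → (Subgroup G → Prop) → Prop
  | .amalg A B _, P => (∃ Y, P Y ∧ InConjOf A Y) ∧ (∃ Y, P Y ∧ InConjOf B Y)
  | .hnn A _ _, P => ∃ Y, P Y ∧ InConjOf A Y


/-- The subgroup `D = ⟨N_G(C₁) ∪ B₁⟩` appearing in the canonical decomposition
`G = A₁ ⨿_{N_{A₁}(C₁)} D` of an amalgam `G = A₁ ⨿_{C₁} B₁`. -/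
def amalgD {G : Type u} [Group G] [TopologicalSpace G] [IsTopologicalGroup G]
    (B₁ C₁ : Subgroup G) : Subgroup G :=
  (Subgroup.normalizer (C₁ : Set G) ⊔ B₁).topologicalClosure

/-- The subgroup `E = ⟨A₁ ∪ N_G(C₁^{t₁})⟩` appearing in the canonical decomposition
`G = HNN(E, N_{A₁}(C₁), t₁)` of an HNN-extension `G = HNN(A₁, C₁, t₁)`. -/
def hnnE {G : Type u} [Group G] [TopologicalSpace G] [IsTopologicalGroup G]
    (A₁ C₁ : Subgroup G) (t₁ : G) : Subgroup G :=
  (A₁ ⊔ Subgroup.normalizer ((conjSub t₁ C₁ : Subgroup G) : Set G)).topologicalClosure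

/-!
The kernel `K` is abelian, and `K₁` centralizes it because `[K₁, K] ≤ K₁ ∩ K = 1`. A nontrivial
element of `K₁` maps to a nonzero element of `N/K ≅ ℤ_p`, and a closed subgroup of `ℤ_p`
containing a nonzero element contains some `p^m ℤ_p`; so every `p^m`-th power centralizes `K`.
Conjugation by `n` acts on `K ≅ ℤ_p` as multiplication by a unit `u` with `u^(p^m) = 1`, and for
odd `p` the lifting-the-exponent lemma forces `u = 1`. So `K` is central, and since `N/K` is
procyclic, `N` is abelian. Lifting a generator of `N/K` along the `p`-adic power map `c ↦ n₀^c`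
splits the extension, and the resulting continuous bijection `ℤ_p × ℤ_p → N` is a homeomorphism
by compactness.
-/

open Filter Topology Function

namespace PadicInt

variable {p : ℕ} [Fact p.Prime]

theorem eq_one_of_pow_prime_pow_eq_one (hp : 2 < p) {u : ℤ_[p]} {m : ℕ} (h : u ^ p ^ m = 1) :
    u = 1 := by
  have hpu : (p : ℤ_[p]) ∣ u - 1 := by
    rw [← Ideal.mem_span_singleton, ← maximalIdeal_eq_span_p, ← ker_toZMod, RingHom.mem_ker,
      map_sub, map_one, ← ZMod.pow_card_pow (n := m) (toZMod u), ← map_pow, h, map_one,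
      sub_self]
  have hu : ¬(p : ℤ_[p]) ∣ u := fun hu =>
    prime_p.not_isUnit (isUnit_of_dvd_one (by simpa using dvd_sub hu hpu))
  have hlte := emultiplicity_pow_prime_pow_sub_pow_prime_pow prime_p
    ((Fact.out : p.Prime).odd_of_ne_two hp.ne') hpu hu m
  rw [h, one_pow, sub_self, emultiplicity_zero, eq_comm, ENat.add_eq_top] at hlte
  rw [← sub_eq_zero]
  by_contra hne
  exact hlte.elim (emultiplicity_eq_top.1 · (.of_not_isUnit prime_p.not_isUnit hne))
    (WithTop.natCast_ne_top m)

instance comap_natCast_nhds_neBot (c : ℤ_[p]) : NeBot (comap (Nat.cast : ℕ → ℤ_[p]) (𝓝 c)) :=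
  comap_neBot_iff_frequently.2 (mem_closure_iff_frequently.1 (denseRange_natCast c))

theorem continuous_monoidHom_ext {M : Type*} [Monoid M] [TopologicalSpace M] [T2Space M]
    {f g : Multiplicative ℤ_[p] →* M} (hf : Continuous f) (hg : Continuous g)
    (h : f (.ofAdd 1) = g (.ofAdd 1)) : f = g := by
  have hnat : f ∘ .ofAdd ∘ Nat.cast = g ∘ .ofAdd ∘ Nat.cast := by
    ext n
    simp only [comp_apply, ← nsmul_one, ofAdd_nsmul, map_pow, h]
  refine MonoidHom.ext fun c => ?_
  exact congrFun (denseRange_natCast.equalizer (hf.comp continuous_ofAdd)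
    (hg.comp continuous_ofAdd) hnat) c.toAdd

/-- Closed subgroups of `ℤ_p` are ideals. -/
theorem ofAdd_mul_mem {H : Subgroup (Multiplicative ℤ_[p])}
    (hH : IsClosed (H : Set (Multiplicative ℤ_[p]))) {c : ℤ_[p]} (hc : .ofAdd c ∈ H)
    (z : ℤ_[p]) : .ofAdd (z * c) ∈ H :=
  denseRange_natCast.induction_on z
    (hH.preimage (continuous_ofAdd.comp (continuous_id.mul continuous_const)))
    fun n => by simpa only [← nsmul_eq_mul, ofAdd_nsmul] using pow_mem hc n

theorem dvd_pow_valuation {c : ℤ_[p]} (hc : c ≠ 0) : c ∣ (p : ℤ_[p]) ^ c.valuation := by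
  nth_rewrite 1 [unitCoeff_spec hc]
  exact Units.mul_left_dvd.2 dvd_rfl

end PadicInt

theorem IsTopIsoZp.le_centralizer {p : ℕ} [Fact p.Prime] {N : Type*} [Group N]
    [TopologicalSpace N] {K : Subgroup N} (hK : IsTopIsoZp p K) : K ≤ centralizer K := by
  obtain ⟨e, -, -⟩ := hK
  intro a ha b hb
  exact congrArg Subtype.val (e.injective (by simp only [map_mul, mul_comm] :
    e (⟨b, hb⟩ * ⟨a, ha⟩) = e (⟨a, ha⟩ * ⟨b, hb⟩)))

/-- `Aut(ℤ_p) ≅ ℤ_p^×` has no `p`-torsion for odd `p`. -/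
theorem IsTopIsoZp.eq_one_of_pow_eq_one {p : ℕ} [Fact p.Prime] (hp : 2 < p) {H : Type*}
    [Group H] [TopologicalSpace H] (hH : IsTopIsoZp p H) {α : MulAut H} (hα : Continuous α)
    {m : ℕ} (h : α ^ p ^ m = 1) : α = 1 := by
  obtain ⟨e, he, hes⟩ := hH
  set u := (e (α (e.symm (.ofAdd 1)))).toAdd
  have hu : ∀ x, (e (α x)).toAdd = u * (e x).toAdd := by
    have hext := PadicInt.continuous_monoidHom_ext
      (f := e.toMonoidHom.comp (α.toMonoidHom.comp e.symm.toMonoidHom))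
      (g := (AddMonoidHom.mulLeft u).toMultiplicative) (he.comp (hα.comp hes))
      (continuous_ofAdd.comp (continuous_const.mul continuous_toAdd)) (by simp [u])
    intro x
    simpa using congrArg Multiplicative.toAdd (DFunLike.congr_fun hext (e x))
  have hpow : ∀ j x, (e ((α ^ j) x)).toAdd = u ^ j * (e x).toAdd := by
    intro j
    induction j with
    | zero => simp
    | succ j ih => intro x; rw [pow_succ', MulAut.mul_apply, hu, ih, pow_succ']; ring
  have hu1 : u = 1 := PadicInt.eq_one_of_pow_prime_pow_eq_one hp (m := m) <| by
    simpa [h] using (hpow (p ^ m) (e.symm (.ofAdd 1))).symm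
  ext x
  simpa [hu1] using hu x

theorem mem_centralizer_of_pow_mem_centralizer {p : ℕ} [Fact p.Prime] (hp : 2 < p) {N : Type*}
    [Group N] [TopologicalSpace N] [IsTopologicalGroup N] {K : Subgroup N} [K.Normal]
    (hK : IsTopIsoZp p K) {n : N} {m : ℕ} (h : n ^ p ^ m ∈ centralizer (K : Set N)) :
    n ∈ centralizer (K : Set N) := by
  have conj_eq_one (g : N) :
      MulAut.conjNormal (H := K) g = 1 ↔ g ∈ centralizer (K : Set N) := by
    simp only [MulEquiv.ext_iff, Subtype.ext_iff, MulAut.conjNormal_apply, MulAut.one_apply,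
      Subtype.forall, mem_centralizer_iff, SetLike.mem_coe]
    exact forall₂_congr fun a _ => by rw [mul_inv_eq_iff_eq_mul, eq_comm]
  have hcont : Continuous (MulAut.conjNormal (H := K) n) :=
    continuous_induced_rng.2 <| (continuous_const.mul continuous_subtype_val).mul continuous_const
  exact (conj_eq_one n).1 <| hK.eq_one_of_pow_eq_one hp hcont <| by
    rw [← map_pow]; exact (conj_eq_one _).2 h

section QuotientZp

variable {p : ℕ} [Fact p.Prime] {N : Type*} [Group N] [TopologicalSpace N] [CompactSpace N]
  {π : N →* Multiplicative ℤ_[p]}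

theorem mem_of_toAdd_map_eq_mul (hπ : Continuous π) {S : Subgroup N}
    (hS : IsClosed (S : Set N)) (hKS : π.ker ≤ S) {x y : N} (hx : x ∈ S) {z : ℤ_[p]}
    (hy : (π y).toAdd = z * (π x).toAdd) : y ∈ S := by
  have hSπ : IsClosed ((S.map π : Subgroup _) : Set (Multiplicative ℤ_[p])) := by
    rw [coe_map]
    exact (hS.isCompact.image hπ).isClosed
  rw [← comap_map_eq_self hKS, Subgroup.mem_comap, ← ofAdd_toAdd (π y), hy]
  exact PadicInt.ofAdd_mul_mem hSπ (mem_map_of_mem π hx) z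

variable [T2Space N] [IsTopologicalGroup N]

theorem exists_pow_mem_centralizer (hπ : Continuous π) (hK : π.ker ≤ centralizer π.ker)
    {K₁ : Subgroup N} (hK₁n : K₁.Normal) (hK₁ne : K₁ ≠ ⊥) (hdisj : K₁ ⊓ π.ker = ⊥) :
    ∃ m : ℕ, ∀ n : N, n ^ p ^ m ∈ centralizer (π.ker : Set N) := by
  obtain ⟨⟨x, hxK₁⟩, hx1⟩ := ne_bot_iff_exists_ne_one.1 hK₁ne
  have hxC : x ∈ centralizer (π.ker : Set N) := fun k hk =>
    (commute_of_normal_of_disjoint _ _ hK₁n inferInstance (disjoint_iff.2 hdisj) x k hxK₁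
      hk).eq.symm
  have hx0 : (π x).toAdd ≠ 0 := fun h0 => hx1 <| Subtype.ext <| by
    simpa [hdisj] using mem_inf.2 ⟨hxK₁, (π.mem_ker.2 (toAdd_eq_zero.1 h0))⟩
  obtain ⟨w, hw⟩ := PadicInt.dvd_pow_valuation hx0
  refine ⟨(π x).toAdd.valuation, fun n => mem_of_toAdd_map_eq_mul hπ
    (Set.isClosed_centralizer _) hK hxC (z := w * (π n).toAdd) ?_⟩
  rw [map_pow, toAdd_pow, nsmul_eq_mul, Nat.cast_pow, hw]
  ring

theorem commute_of_ker_le_center (hπ : Continuous π) (hπs : Surjective π)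
    (hK : π.ker ≤ center N) (a b : N) : Commute a b := by
  obtain ⟨n₀, hn₀⟩ := hπs (.ofAdd 1)
  have eq_top (S : Subgroup N) (hS : IsClosed (S : Set N)) (hKS : π.ker ≤ S) (hn₀S : n₀ ∈ S) :
      S = ⊤ :=
    eq_top_iff.2 fun y _ =>
      mem_of_toAdd_map_eq_mul hπ hS hKS hn₀S (z := (π y).toAdd) (by simp [hn₀])
  have hcen : (center N : Set N) = (Set.univ : Set N).centralizer := by
    rw [← centralizer_univ]; rfl
  have hn₀Z : n₀ ∈ center N := by
    have := eq_top (centralizer {n₀}) (Set.isClosed_centralizer _)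
      (hK.trans (center_le_centralizer _)) (mem_centralizer_singleton_iff.2 rfl)
    exact mem_center_iff.2 fun g => mem_centralizer_singleton_iff.1 (this ▸ mem_top g)
  have hZ := eq_top (center N) (hcen ▸ Set.isClosed_centralizer _) hK hn₀Z
  exact (mem_center_iff.1 (hZ ▸ mem_top a) b).symm

end QuotientZp

theorem tendsto_of_mapClusterPt_of_tendsto_inv_mul {G : Type*} [Group G] [TopologicalSpace G]
    [IsTopologicalGroup G] {ι : Type*} {l : Filter ι} {s : ι → G} {y : G}
    (hy : MapClusterPt y l s)
    (hs : Tendsto (fun ij : ι × ι => (s ij.1)⁻¹ * s ij.2) (l ×ˢ l) (𝓝 1)) :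
    Tendsto s l (𝓝 y) := by
  suffices Tendsto (fun i => y⁻¹ * s i) l (𝓝 1) by
    simpa using this.const_mul y
  intro U hU
  rw [mem_map]
  obtain ⟨V, hV, hVU⟩ := exists_nhds_one_split hU
  obtain ⟨A, hA, hAV⟩ := mem_prod_self_iff.1 (hs hV)
  have hyV : ∀ᶠ z in 𝓝 y, y⁻¹ * z ∈ V :=
    (continuous_const.mul continuous_id).tendsto' y 1 (inv_mul_cancel y) hV
  obtain ⟨i, hiV, hiA⟩ := ((hy.frequently hyV).and_eventually hA).exists
  filter_upwards [hA] with j hj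
  simpa [mul_assoc] using hVU _ hiV _ (hAV (Set.mk_mem_prod hiA hj))

/-- The `p`-adic power `x ^ c`: the limit of `x ^ n` as `n → c` `p`-adically (a junk value unless
that limit exists, which it does in a pro-`p` group). -/
noncomputable def padicPow (p : ℕ) [Fact p.Prime] {G : Type*} [Group G] [TopologicalSpace G]
    (x : G) (c : ℤ_[p]) : G :=
  limUnder (comap (Nat.cast : ℕ → ℤ_[p]) (𝓝 c)) (x ^ ·)

theorem IsProP.exists_pow_prime_pow_mem {p : ℕ} {G : Type u} [Group G] [TopologicalSpace G]
    (hG : IsProP p G) (V : OpenNormalSubgroup G) : ∃ k : ℕ, ∀ x : G, x ^ p ^ k ∈ V := by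
  obtain ⟨k, hk⟩ := hG.2.2.2 V.toSubgroup V.isNormal' V.isOpen'
  exact ⟨k, fun x => hk ▸ V.toSubgroup.pow_index_mem x⟩

namespace IsProP

variable {p : ℕ} [Fact p.Prime] {G : Type u} [Group G] [TopologicalSpace G]
  [IsTopologicalGroup G]

theorem tendsto_pow_inv_mul_pow (hG : IsProP p G) (x : G) {ι : Type*} {l : Filter ι}
    {a b : ι → ℕ} (hab : Tendsto (fun i => (a i : ℤ_[p]) - b i) l (𝓝 0)) :
    Tendsto (fun i => (x ^ b i)⁻¹ * x ^ a i) l (𝓝 1) := by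
  have := hG.1
  have := hG.2.2.1
  refine (nhds_basis_opens 1).tendsto_right_iff.2 fun W ⟨h1W, hWo⟩ => ?_
  obtain ⟨V, hVW⟩ := ProfiniteGrp.exist_openNormalSubgroup_sub_open_nhds_of_one hWo h1W
  obtain ⟨k, hk⟩ := hG.exists_pow_prime_pow_mem V
  have hball : Metric.closedBall (0 : ℤ_[p]) ((p : ℝ) ^ (-(k : ℤ))) ∈ 𝓝 0 :=
    Metric.closedBall_mem_nhds 0 (zpow_pos (mod_cast (Fact.out : p.Prime).pos) _)
  filter_upwards [hab hball] with i hi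
  have hdvd : (p : ℤ) ^ k ∣ (a i : ℤ) - b i := by
    rw [← PadicInt.norm_int_le_pow_iff_dvd]
    simpa using hi
  obtain ⟨r, hr⟩ := hdvd
  have hpow : (x ^ b i)⁻¹ * x ^ a i = (x ^ p ^ k) ^ r := by
    rw [← zpow_natCast x (p ^ k), ← zpow_mul]
    push_cast
    rw [← hr]
    group
  exact hVW (hpow ▸ V.toSubgroup.zpow_mem (hk x) r)

theorem tendsto_pow_padicPow (hG : IsProP p G) (x : G) (c : ℤ_[p]) :
    Tendsto (x ^ ·) (comap (Nat.cast : ℕ → ℤ_[p]) (𝓝 c)) (𝓝 (padicPow p x c)) := by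
  have := hG.1
  set F := comap (Nat.cast : ℕ → ℤ_[p]) (𝓝 c)
  obtain ⟨y, hy⟩ := exists_clusterPt_of_compactSpace (map (x ^ ·) F)
  refine tendsto_nhds_limUnder ⟨y, tendsto_of_mapClusterPt_of_tendsto_inv_mul hy
    (hG.tendsto_pow_inv_mul_pow x ?_)⟩
  have h1 : Tendsto (fun mn : ℕ × ℕ => (mn.1 : ℤ_[p])) (F ×ˢ F) (𝓝 c) :=
    tendsto_comap.comp tendsto_fst
  have h2 : Tendsto (fun mn : ℕ × ℕ => (mn.2 : ℤ_[p])) (F ×ˢ F) (𝓝 c) :=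
    tendsto_comap.comp tendsto_snd
  simpa using h2.sub h1

theorem tendsto_pow_padicPow_of_tendsto (hG : IsProP p G) (x : G) {ι : Type*} {l : Filter ι}
    {a : ι → ℕ} {c : ℤ_[p]} (ha : Tendsto (fun i => (a i : ℤ_[p])) l (𝓝 c)) :
    Tendsto (fun i => x ^ a i) l (𝓝 (padicPow p x c)) :=
  (hG.tendsto_pow_padicPow x c).comp (tendsto_comap_iff.2 ha)

theorem padicPow_natCast (hG : IsProP p G) (x : G) (n : ℕ) : padicPow p x n = x ^ n :=
  have := hG.2.1
  tendsto_nhds_unique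
    (hG.tendsto_pow_padicPow_of_tendsto x (l := (atTop : Filter ℕ)) tendsto_const_nhds)
    tendsto_const_nhds

theorem padicPow_add (hG : IsProP p G) (x : G) (c d : ℤ_[p]) :
    padicPow p x (c + d) = padicPow p x c * padicPow p x d := by
  have := hG.2.1
  let l := comap (Nat.cast : ℕ → ℤ_[p]) (𝓝 c) ×ˢ comap (Nat.cast : ℕ → ℤ_[p]) (𝓝 d)
  have hc : Tendsto (fun mn : ℕ × ℕ => (mn.1 : ℤ_[p])) l (𝓝 c) := tendsto_comap.comp tendsto_fst
  have hd : Tendsto (fun mn : ℕ × ℕ => (mn.2 : ℤ_[p])) l (𝓝 d) := tendsto_comap.comp tendsto_snd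
  refine tendsto_nhds_unique (hG.tendsto_pow_padicPow_of_tendsto x
    (a := fun mn : ℕ × ℕ => mn.1 + mn.2) (by simpa using hc.add hd)) ?_
  simpa [pow_add] using (hG.tendsto_pow_padicPow_of_tendsto x hc).mul
    (hG.tendsto_pow_padicPow_of_tendsto x hd)

theorem tendsto_padicPow_zero (hG : IsProP p G) (x : G) :
    Tendsto (padicPow p x) (𝓝 0) (𝓝 1) := by
  refine (closed_nhds_basis (1 : G)).tendsto_right_iff.2 fun W ⟨hW, hWc⟩ => ?_
  have hpow0 := hG.tendsto_pow_padicPow x 0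
  rw [← Nat.cast_zero, hG.padicPow_natCast, pow_zero, Nat.cast_zero] at hpow0
  obtain ⟨U, hU, hUW⟩ := Filter.mem_comap.1 (hpow0 hW)
  filter_upwards [interior_mem_nhds.2 hU] with c hc
  exact hWc.mem_of_tendsto (hG.tendsto_pow_padicPow x c) <| Filter.mem_comap.2
    ⟨interior U, isOpen_interior.mem_nhds hc, fun n hn => hUW (interior_subset (s := U) hn)⟩

theorem continuous_padicPow (hG : IsProP p G) (x : G) : Continuous (padicPow p x) := by
  refine continuous_iff_continuousAt.2 fun c => ?_
  have hsub : Tendsto (· - c) (𝓝 c) (𝓝 0) := tendsto_sub_nhds_zero_iff.2 tendsto_id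
  have := (hG.tendsto_padicPow_zero x).comp hsub |>.const_mul (padicPow p x c)
  simpa [ContinuousAt, ← hG.padicPow_add, Function.comp_def] using this

noncomputable def padicPowHom (hG : IsProP p G) (x : G) : Multiplicative ℤ_[p] →* G where
  toFun c := padicPow p x c.toAdd
  map_one' := by simpa using hG.padicPow_natCast x 0
  map_mul' a b := hG.padicPow_add x a.toAdd b.toAdd

theorem continuous_padicPowHom (hG : IsProP p G) (x : G) : Continuous (hG.padicPowHom x) :=
  (hG.continuous_padicPow x).comp continuous_toAdd

theorem padicPowHom_ofAdd_one (hG : IsProP p G) (x : G) : hG.padicPowHom x (.ofAdd 1) = x := by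
  show padicPow p x (1 : ℕ) = x
  simpa using hG.padicPow_natCast x 1

end IsProP

theorem bijective_mul_of_rightInverse {G Q : Type*} [Group G] [Group Q] {π : G →* Q}
    {σ : Q → G} (hσ : ∀ q, π (σ q) = q) :
    Bijective (fun kq : π.ker × Q => (kq.1 : G) * σ kq.2) := by
  refine ⟨fun ⟨k, q⟩ ⟨k', q'⟩ h => ?_, fun g => ?_⟩
  · have hq : q = q' := by
      simpa [hσ, π.mem_ker.1 k.2, π.mem_ker.1 k'.2] using congrArg π h
    subst hq
    exact Prod.ext (Subtype.ext (mul_right_cancel h)) rfl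
  · exact ⟨(⟨g * (σ (π g))⁻¹, by simp [MonoidHom.mem_ker, hσ]⟩, π g), by simp⟩

theorem isTopIsoZpxZp_of_continuous_bijective {p : ℕ} [Fact p.Prime] {N : Type*} [Group N]
    [TopologicalSpace N] [T2Space N] (f : Multiplicative ℤ_[p] × Multiplicative ℤ_[p] →* N)
    (hf : Continuous f) (hbij : Bijective f) : IsTopIsoZpxZp p N :=
  let e := MulEquiv.ofBijective f hbij
  ⟨e.symm, hf.continuous_symm_of_equiv_compact_to_t2 (f := e.toEquiv), hf⟩

theorem isTopIsoZpxZp_of_commute {p : ℕ} [Fact p.Prime] {N : Type u} [Group N]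
    [TopologicalSpace N] [IsTopologicalGroup N] (hN : IsProP p N)
    (hcomm : ∀ a b : N, Commute a b) {π : N →* Multiplicative ℤ_[p]} (hπ : Continuous π)
    (hπs : Surjective π) (hK : IsTopIsoZp p π.ker) : IsTopIsoZpxZp p N := by
  have := hN.2.1
  obtain ⟨eK, -, heK⟩ := hK
  obtain ⟨n₀, hn₀⟩ := hπs (.ofAdd 1)
  let σ := hN.padicPowHom n₀
  have hσ : π.comp σ = MonoidHom.id _ :=
    PadicInt.continuous_monoidHom_ext (hπ.comp (hN.continuous_padicPowHom n₀)) continuous_id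
      (by simp [σ, hN.padicPowHom_ofAdd_one, hn₀])
  refine isTopIsoZpxZp_of_continuous_bijective
    ((π.ker.subtype.comp eK.symm.toMonoidHom).noncommCoprod σ fun _ _ => hcomm _ _) ?_ ?_
  · exact (continuous_subtype_val.comp (heK.comp continuous_fst)).mul
      ((hN.continuous_padicPowHom n₀).comp continuous_snd)
  · show Bijective ((fun kq : π.ker × _ => (kq.1 : N) * σ kq.2) ∘ Prod.map eK.symm id)
    exact (bijective_mul_of_rightInverse (π := π) (DFunLike.congr_fun hσ)).comp
      (eK.symm.bijective.prodMap bijective_id)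

theorem extension_is_abelian_of_odd_general
    (p : ℕ) [Fact p.Prime] (hp : 2 < p)
    (N : Type u) [Group N] [TopologicalSpace N] [IsTopologicalGroup N] (hN : IsProP p N)
    (K : Subgroup N) [K.Normal] (hK : IsTopIsoZp p ↥K)
    (hQ : IsTopIsoZp p (N ⧸ K))
    (K₁ : Subgroup N) (hK₁n : K₁.Normal)
    (hK₁ne : K₁ ≠ ⊥) (hdisj : K₁ ⊓ K = ⊥) :
    IsTopIsoZpxZp p N := by
  have := hN.1
  have := hN.2.1
  obtain ⟨eQ, heQ, -⟩ := hQ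
  let π := eQ.toMonoidHom.comp (QuotientGroup.mk' K)
  have hπ : Continuous π := heQ.comp continuous_quotient_mk'
  have hπs : Surjective π := eQ.surjective.comp (QuotientGroup.mk'_surjective K)
  have hker : π.ker = K := by
    ext x
    simp [π]
  rw [← hker] at hK hdisj
  obtain ⟨m, hm⟩ := exists_pow_mem_centralizer hπ hK.le_centralizer hK₁n hK₁ne hdisj
  have hcentral : π.ker ≤ center N := centralizer_eq_top_iff_subset.1 <|
    eq_top_iff.2 fun n _ => mem_centralizer_of_pow_mem_centralizer hp hK (hm n)
  exact isTopIsoZpxZp_of_commute hN (commute_of_ker_le_center hπ hπs hcentral) hπ hπs hK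

/-- for `p > 2`, a pro-`p` group `N` which is an extension of `ℤ_p` by `ℤ_p`
and has a nontrivial closed normal subgroup meeting the kernel trivially is
isomorphic to `ℤ_p × ℤ_p`. -/
theorem extension_is_abelian_of_odd
    (p : ℕ) [Fact p.Prime] (hp : 2 < p)
    (N : Type u) [Group N] [TopologicalSpace N] [IsTopologicalGroup N] (hN : IsProP p N)
    (K : Subgroup N) [K.Normal] (hKcl : IsClosed (K : Set N)) (hK : IsTopIsoZp p ↥K)
    (hQ : IsTopIsoZp p (N ⧸ K))
    (K₁ : Subgroup N) (hK₁cl : IsClosed (K₁ : Set N)) (hK₁n : K₁.Normal)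
    (hK₁ne : K₁ ≠ ⊥) (hdisj : K₁ ⊓ K = ⊥) :
    IsTopIsoZpxZp p N :=
  extension_is_abelian_of_odd_general p hp N hN K hK hQ K₁ hK₁n hK₁ne hdisj
end

section
/- Let N be a pro-2 group containing a closed normal subgroup K with K isomorphic to ℤ₂ and N/K isomorphic to ℤ₂. If N contains a closed normal subgroup K₁ isomorphic to ℤ₂ with K₁ ∩ K = 1, then N is isomorphic (as a topological group) either to ℤ₂ × ℤ₂ or to the pro-2 Klein bottle. -/
open Subgroup

universe u

/-!
Lift a topological generator of `N ⧸ K ≅ ℤ₂` to `t ∈ N` and let `T` be the closed subgroup it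
generates. Every element of `T` is `x ^ 2` or `t * x ^ 2` with `x ∈ T`, so every element of
`T ⊓ K` is the square of an element of `T ⊓ K`; since `ℤ₂` has no nonzero infinitely
`2`-divisible element, `T ⊓ K = ⊥`, and `N = K ⋊ T` with `T ≅ ℤ₂`.

Conjugation acts on `K ≅ ℤ₂` as multiplication by a continuous character `c : N → ℤ₂ˣ`, trivial
on `K` and on `K₁` because `[K₁, K] ≤ K₁ ⊓ K = ⊥`. Writing `1 ≠ k₁ ∈ K₁` as `k * s` with `k ∈ K`
and `s ∈ T` gives `c s = 1` with `s ≠ 1`, so the kernel of `c` on `T ≅ ℤ₂` is open: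
`c t ^ 2 ^ v = 1`, hence `c t = ±1`. If `c t = 1` then `N ≅ K × T`; if `c t = -1`, `N` is the
pro-2 Klein bottle.
-/

open Multiplicative

namespace PadicInt

variable {p : ℕ} [Fact p.Prime]

theorem eq_zero_of_forall_mem_eq_p_mul {S : Set ℤ_[p]} (hS : ∀ x ∈ S, ∃ y ∈ S, x = p * y)
    {x : ℤ_[p]} (hx : x ∈ S) : x = 0 := by
  have hdvd : ∀ n : ℕ, ∀ x ∈ S, (p : ℤ_[p]) ^ n ∣ x := by
    intro n
    induction n with
    | zero => simp
    | succ n ih =>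
      intro x hx
      obtain ⟨y, hy, rfl⟩ := hS x hx
      rw [pow_succ']
      exact mul_dvd_mul_left _ (ih y hy)
  by_contra hx0
  have := (mem_span_pow_iff_le_valuation x hx0 (x.valuation + 1)).mp
    (Ideal.mem_span_singleton.mpr (hdvd _ x hx))
  omega

theorem eq_zero_of_natCast_add_p_mul_eq_zero {i : ℕ} (hi : i < p) {u : ℤ_[p]}
    (h : (i : ℤ_[p]) + p * u = 0) : i = 0 ∧ u = 0 := by
  have hi0 : i = 0 := by
    have := congrArg toZMod h
    rw [map_add, map_mul, map_natCast, map_natCast, ZMod.natCast_self, zero_mul, add_zero,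
      map_zero, ZMod.natCast_eq_zero_iff] at this
    exact Nat.eq_zero_of_dvd_of_lt this hi
  subst hi0
  refine ⟨rfl, ?_⟩
  simpa [(Fact.out : p.Prime).ne_zero] using h

theorem map_eq_mul_map_one (f : ℤ_[p] →+ ℤ_[p]) (hf : Continuous f) (x : ℤ_[p]) :
    f x = x * f 1 :=
  denseRange_natCast.induction_on x (isClosed_eq hf (continuous_id.mul continuous_const))
    fun n => by rw [← nsmul_eq_mul, ← map_nsmul, nsmul_one]

theorem map_ofAdd_one_pow_eq_one {M : Type*} [Monoid M] [TopologicalSpace M] [T1Space M]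
    (φ : Multiplicative ℤ_[p] →* M) (hφ : Continuous φ) {x : ℤ_[p]} (hx0 : x ≠ 0)
    (hx : φ (ofAdd x) = 1) : φ (ofAdd 1) ^ p ^ x.valuation = 1 := by
  have hmul : ∀ r : ℤ_[p], φ (ofAdd (r * x)) = 1 := fun r =>
    denseRange_natCast.induction_on (p := fun r => φ (ofAdd (r * x)) = 1) r
      (isClosed_singleton.preimage (hφ.comp (continuous_ofAdd.comp
        (continuous_id.mul continuous_const))))
      fun n => by rw [← nsmul_eq_mul, ofAdd_nsmul, map_pow, hx, one_pow]
  have hpow : (p : ℤ_[p]) ^ x.valuation = ↑(unitCoeff hx0)⁻¹ * x := by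
    rw [eq_comm, Units.inv_mul_eq_iff_eq_mul]
    exact unitCoeff_spec hx0
  rw [← map_pow, ← ofAdd_nsmul, nsmul_eq_mul, mul_one, Nat.cast_pow, hpow]
  exact hmul _

theorem sq_ne_neg_one (w : ℤ_[2]) : w ^ 2 ≠ -1 := by
  intro h
  have hmod := congrArg (toZModPow 2) h
  rw [map_pow, map_neg, map_one] at hmod
  generalize toZModPow 2 w = z at hmod
  revert z
  decide

theorem eq_one_or_eq_neg_one_of_pow_two_pow_eq_one {w : ℤ_[2]} {n : ℕ} (h : w ^ 2 ^ n = 1) :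
    w = 1 ∨ w = -1 := by
  induction n generalizing w with
  | zero => exact Or.inl (by simpa using h)
  | succ n ih =>
    rw [pow_succ', pow_mul] at h
    rcases ih h with h1 | h1
    · exact sq_eq_one_iff.mp h1
    · exact absurd h1 (sq_ne_neg_one w)

end PadicInt

theorem isTopIsoZp_iff {p : ℕ} [Fact p.Prime] {H : Type*} [Group H] [TopologicalSpace H] :
    IsTopIsoZp p H ↔ Nonempty (H ≃ₜ* Multiplicative ℤ_[p]) :=
  ⟨fun ⟨e, he, he'⟩ => ⟨⟨e, he, he'⟩⟩, fun ⟨e⟩ => ⟨e, e.continuous, e.symm.continuous⟩⟩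

namespace ContinuousMulEquiv

variable {G H : Type*} [Mul G] [Mul H] [TopologicalSpace G] [TopologicalSpace H]
  [CompactSpace G] [T2Space H]

noncomputable def ofBijectiveOfCompact (f : G →ₙ* H) (hf : Continuous f)
    (hbij : Function.Bijective f) : G ≃ₜ* H where
  toMulEquiv := MulEquiv.ofBijective f hbij
  continuous_toFun := hf
  continuous_invFun :=
    hf.continuous_symm_of_equiv_compact_to_t2 (f := (MulEquiv.ofBijective f hbij).toEquiv)

end ContinuousMulEquiv

section TopGenBy

variable {G : Type*} [Group G] [TopologicalSpace G] [IsTopologicalGroup G]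

theorem mem_topGenBy (t : G) : t ∈ topGenBy t :=
  le_topologicalClosure _ (subset_closure rfl)

theorem isClosed_topGenBy (t : G) : IsClosed (topGenBy t : Set G) :=
  isClosed_topologicalClosure _

theorem topGenBy_le_iff {t : G} {H : Subgroup G} (hH : IsClosed (H : Set G)) :
    topGenBy t ≤ H ↔ t ∈ H :=
  ⟨fun h => h (mem_topGenBy t), fun h =>
    topologicalClosure_minimal _ ((closure_le H).mpr (Set.singleton_subset_iff.mpr h)) hH⟩

theorem topGenBy_subset {t : G} {S : Set G} (hS : IsClosed S) (h : ∀ m : ℤ, t ^ m ∈ S) :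
    (topGenBy t : Set G) ⊆ S := by
  rw [topGenBy, topologicalClosure_coe, ← zpowers_eq_closure]
  exact closure_minimal (by rintro _ ⟨m, rfl⟩; exact h m) hS

theorem topGenBy_eq_of_continuousMulEquiv {p : ℕ} [Fact p.Prime] {H : Subgroup G}
    (hH : IsClosed (H : Set G)) (e : H ≃ₜ* Multiplicative ℤ_[p]) :
    topGenBy (e.symm (ofAdd 1) : G) = H := by
  refine le_antisymm ((topGenBy_le_iff hH).mpr (e.symm _).2) fun h hh => ?_
  have key : ∀ y, (e.symm y : G) ∈ topGenBy (e.symm (ofAdd 1) : G) := fun y =>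
    PadicInt.denseRange_natCast.induction_on (p := fun z => (e.symm (ofAdd z) : G) ∈ _)
      (toAdd y) ((isClosed_topGenBy _).preimage (by fun_prop))
      fun n => by
        rw [← nsmul_one, ofAdd_nsmul, map_pow, Subgroup.coe_pow]
        exact pow_mem (mem_topGenBy _) n
  simpa using key (e ⟨h, hh⟩)

variable [CompactSpace G] [T2Space G]

theorem exists_eq_pow_mul_pow_of_mem_topGenBy {t f : G} (hf : f ∈ topGenBy t) {p : ℕ}
    (hp : 0 < p) : ∃ i < p, ∃ x ∈ topGenBy t, f = t ^ i * x ^ p := by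
  have : CompactSpace (topGenBy t) :=
    isCompact_iff_compactSpace.mp (isClosed_topGenBy t).isCompact
  set R := Set.range fun q : Fin p × topGenBy t => t ^ (q.1 : ℕ) * (q.2 : G) ^ p
  have hR : IsClosed R := (isCompact_range (by fun_prop)).isClosed
  have hp' : (0 : ℤ) < p := by exact_mod_cast hp
  have hzpow (m : ℤ) : t ^ m ∈ R := by
    have hlt := Int.emod_lt_of_pos m hp'
    refine ⟨(⟨(m % p).toNat, by omega⟩, ⟨t ^ (m / p), zpow_mem (mem_topGenBy t) _⟩), ?_⟩
    dsimp only
    rw [← zpow_natCast, Int.toNat_of_nonneg (Int.emod_nonneg _ hp'.ne'), ← zpow_natCast,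
      ← zpow_mul, ← zpow_add, Int.emod_add_ediv_mul]
  obtain ⟨⟨i, x⟩, rfl⟩ := topGenBy_subset hR hzpow hf
  exact ⟨i, i.2, x, x.2, rfl⟩

end TopGenBy

section Procyclic

variable {G : Type*} [Group G] [TopologicalSpace G] [IsTopologicalGroup G] [CompactSpace G]
  {p : ℕ} [Fact p.Prime] {π : G →* Multiplicative ℤ_[p]} {t : G}

theorem exists_mem_topGenBy_map_eq (hπ : Continuous π) (ht : π t = ofAdd 1)
    (y : Multiplicative ℤ_[p]) : ∃ x ∈ topGenBy t, π x = y :=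
  PadicInt.denseRange_natCast.induction_on (p := fun z => ofAdd z ∈ π '' topGenBy t) (toAdd y)
    (((isClosed_topGenBy t).isCompact.image hπ).isClosed.preimage continuous_ofAdd)
    fun n => ⟨t ^ n, pow_mem (mem_topGenBy t) n, by rw [map_pow, ht, ← ofAdd_nsmul, nsmul_one]⟩

theorem exists_eq_pow_of_mem_topGenBy_of_map_eq_one [T2Space G] (ht : π t = ofAdd 1) {f : G}
    (hf : f ∈ topGenBy t) (hf1 : π f = 1) : ∃ x ∈ topGenBy t, π x = 1 ∧ f = x ^ p := by
  obtain ⟨i, hi, x, hx, rfl⟩ :=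
    exists_eq_pow_mul_pow_of_mem_topGenBy hf (Fact.out : p.Prime).pos
  have hsum : (i : ℤ_[p]) + p * toAdd (π x) = 0 := by
    simpa [ht, ← ofAdd_nsmul, nsmul_eq_mul] using congrArg toAdd hf1
  obtain ⟨rfl, hx1⟩ := PadicInt.eq_zero_of_natCast_add_p_mul_eq_zero hi hsum
  exact ⟨x, hx, by simpa using congrArg ofAdd hx1, by simp⟩

theorem topGenBy_inf_eq_bot [T2Space G] (ht : π t = ofAdd 1) {K : Subgroup G}
    (hK : ∀ x, π x = 1 ↔ x ∈ K) (e : K →* Multiplicative ℤ_[p]) (he : Function.Injective e) :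
    topGenBy t ⊓ K = ⊥ := by
  set S : Set ℤ_[p] := {y | ∃ x ∈ topGenBy t, ∃ hx : x ∈ K, y = toAdd (e ⟨x, hx⟩)}
  have hdiv : ∀ y ∈ S, ∃ z ∈ S, y = p * z := by
    rintro _ ⟨f, hf, hfK, rfl⟩
    obtain ⟨x, hx, hx1, rfl⟩ :=
      exists_eq_pow_of_mem_topGenBy_of_map_eq_one ht hf ((hK f).mpr hfK)
    refine ⟨_, ⟨x, hx, (hK x).mp hx1, rfl⟩, ?_⟩
    rw [← nsmul_eq_mul, ← toAdd_pow, ← map_pow]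
    rfl
  refine (Subgroup.eq_bot_iff_forall _).mpr fun x ⟨hxT, hxK⟩ => ?_
  have h0 := PadicInt.eq_zero_of_forall_mem_eq_p_mul hdiv ⟨x, hxT, hxK, rfl⟩
  have : (⟨x, hxK⟩ : K) = 1 := he (by simpa using congrArg ofAdd h0)
  exact congrArg Subtype.val this

end Procyclic

theorem Subgroup.le_centralizer_of_mulEquiv {G M : Type*} [Group G] [CommGroup M]
    {K : Subgroup G} (e : K ≃* M) : K ≤ centralizer K :=
  le_centralizer_iff_isMulCommutative.mpr
    ⟨⟨fun x y => e.injective (by rw [map_mul, map_mul, mul_comm])⟩⟩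

section ConjCoeff

variable {p : ℕ} [Fact p.Prime] {N : Type*} [Group N] [TopologicalSpace N] {K : Subgroup N}
  [K.Normal]

noncomputable def conjInCoord (e : K ≃ₜ* Multiplicative ℤ_[p]) (n : N) : ℤ_[p] →+ ℤ_[p] :=
  AddMonoidHom.toMultiplicative.symm
    ((e : K →* Multiplicative ℤ_[p]).comp (((MulAut.conjNormal n : K ≃* K) : K →* K).comp
      (e.symm : Multiplicative ℤ_[p] →* K)))

theorem conjInCoord_apply (e : K ≃ₜ* Multiplicative ℤ_[p]) (n : N) (x : ℤ_[p]) :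
    conjInCoord e n x = toAdd (e (MulAut.conjNormal n (e.symm (ofAdd x)))) :=
  rfl

theorem conjInCoord_mul (e : K ≃ₜ* Multiplicative ℤ_[p]) (n m : N) (x : ℤ_[p]) :
    conjInCoord e (n * m) x = conjInCoord e n (conjInCoord e m x) := by
  simp [conjInCoord_apply, MulAut.mul_apply]

variable [ContinuousMul N]

theorem conjInCoord_eq_mul (e : K ≃ₜ* Multiplicative ℤ_[p]) (n : N) (x : ℤ_[p]) :
    conjInCoord e n x = x * conjInCoord e n 1 := by
  refine PadicInt.map_eq_mul_map_one _ ?_ x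
  have : Continuous (MulAut.conjNormal n : K → K) :=
    continuous_induced_rng.2 (by
      simp only [Function.comp_def, MulAut.conjNormal_apply]
      fun_prop)
  exact continuous_toAdd.comp
    (e.continuous.comp (this.comp (e.symm.continuous.comp continuous_ofAdd)))

noncomputable def conjCoeff (e : K ≃ₜ* Multiplicative ℤ_[p]) : N →* ℤ_[p] where
  toFun n := conjInCoord e n 1
  map_one' := by simp [conjInCoord_apply]
  map_mul' n m := by rw [conjInCoord_mul, conjInCoord_eq_mul, mul_comm]

theorem toAdd_conjNormal (e : K ≃ₜ* Multiplicative ℤ_[p]) (n : N) (k : K) :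
    toAdd (e (MulAut.conjNormal n k)) = toAdd (e k) * conjCoeff e n := by
  show _ = _ * conjInCoord e n 1
  simpa [conjInCoord_apply] using conjInCoord_eq_mul e n (toAdd (e k))

theorem conjCoeff_eq_one_iff (e : K ≃ₜ* Multiplicative ℤ_[p]) {n : N} :
    conjCoeff e n = 1 ↔ n ∈ centralizer K := by
  rw [mem_centralizer_iff]
  constructor
  · intro h k hk
    have hconj : MulAut.conjNormal n ⟨k, hk⟩ = ⟨k, hk⟩ :=
      e.injective (by rw [← ofAdd_toAdd (e _), toAdd_conjNormal, h, mul_one, ofAdd_toAdd])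
    have := congrArg Subtype.val hconj
    rw [MulAut.conjNormal_apply] at this
    exact (mul_inv_eq_iff_eq_mul.mp this).symm
  · intro h
    have hconj : MulAut.conjNormal n (e.symm (ofAdd 1)) = e.symm (ofAdd 1) :=
      Subtype.ext (by rw [MulAut.conjNormal_apply, ← h _ (e.symm _).2, mul_inv_cancel_right])
    simpa [hconj, eq_comm] using toAdd_conjNormal e n (e.symm (ofAdd 1))

theorem continuous_conjCoeff [ContinuousInv N] (e : K ≃ₜ* Multiplicative ℤ_[p]) :
    Continuous (conjCoeff e) := by
  have : Continuous fun n : N => MulAut.conjNormal n (e.symm (ofAdd 1)) :=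
    continuous_induced_rng.2 (by
      simp only [Function.comp_def, MulAut.conjNormal_apply]
      fun_prop)
  exact continuous_toAdd.comp (e.continuous.comp this)

end ConjCoeff

section Extension

variable {p : ℕ} [Fact p.Prime] {N : Type*} [Group N] [TopologicalSpace N]
  [IsTopologicalGroup N]

theorem topGenBy_le_centralizer_iff [T2Space N] {K : Subgroup N} [K.Normal]
    (e : K ≃ₜ* Multiplicative ℤ_[p]) {t : N} :
    topGenBy t ≤ centralizer (K : Set N) ↔ conjCoeff e t = 1 := by
  rw [conjCoeff_eq_one_iff]
  exact topGenBy_le_iff (Set.isClosed_centralizer (K : Set N))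

theorem exists_mem_mul_mem_topGenBy [CompactSpace N] {π : N →* Multiplicative ℤ_[p]}
    (hπ : Continuous π) {t : N} (ht : π t = ofAdd 1) {K : Subgroup N}
    (hK : ∀ x, π x = 1 ↔ x ∈ K) (n : N) : ∃ k ∈ K, ∃ s ∈ topGenBy t, n = k * s := by
  obtain ⟨s, hs, hsn⟩ := exists_mem_topGenBy_map_eq hπ ht (π n)
  exact ⟨n * s⁻¹, (hK _).mp (by rw [map_mul, map_inv, hsn, mul_inv_cancel]), s, hs, by group⟩

theorem exists_continuousMulEquiv_topGenBy [CompactSpace N] [T2Space N]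
    {π : N →* Multiplicative ℤ_[p]} (hπ : Continuous π) {t : N} (ht : π t = ofAdd 1)
    {K : Subgroup N} (hK : ∀ x, π x = 1 ↔ x ∈ K) (hinf : topGenBy t ⊓ K = ⊥) :
    ∃ eT : topGenBy t ≃ₜ* Multiplicative ℤ_[p], ∀ x, eT x = π x := by
  have : CompactSpace (topGenBy t) :=
    isCompact_iff_compactSpace.mp (isClosed_topGenBy t).isCompact
  have hinj : Function.Injective (π.comp (topGenBy t).subtype) := by
    refine (injective_iff_map_eq_one _).mpr fun x hx => Subtype.ext ?_
    have hx : (x : N) ∈ topGenBy t ⊓ K := ⟨x.2, (hK x).mp hx⟩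
    rwa [hinf] at hx
  have hsurj : Function.Surjective (π.comp (topGenBy t).subtype) := fun y => by
    obtain ⟨x, hx, rfl⟩ := exists_mem_topGenBy_map_eq hπ ht y
    exact ⟨⟨x, hx⟩, rfl⟩
  exact ⟨.ofBijectiveOfCompact (π.comp (topGenBy t).subtype).toMulHom
    (hπ.comp continuous_subtype_val) ⟨hinj, hsurj⟩, fun x => rfl⟩

theorem exists_conjCoeff_pow_eq_one {K : Subgroup N} [K.Normal]
    (eK : K ≃ₜ* Multiplicative ℤ_[p]) {T : Subgroup N} (eT : T ≃ₜ* Multiplicative ℤ_[p])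
    {t : N} (htT : t ∈ T) (ht : eT ⟨t, htT⟩ = ofAdd 1)
    (hKT : ∀ n, ∃ k ∈ K, ∃ s ∈ T, n = k * s) {K₁ : Subgroup N} (hK₁ : K₁.Normal)
    (hdisj : K₁ ⊓ K = ⊥) (hne : K₁ ≠ ⊥) : ∃ v : ℕ, conjCoeff eK t ^ p ^ v = 1 := by
  obtain ⟨⟨k₁, hk₁⟩, hk₁1⟩ := ne_bot_iff_exists_ne_one.mp hne
  obtain ⟨k, hk, s, hs, rfl⟩ := hKT k₁
  have hcs : conjCoeff eK s = 1 := by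
    have hcomm : k * s ∈ centralizer K := mem_centralizer_iff.mpr fun y hy =>
      (commute_of_normal_of_disjoint K₁ K hK₁ inferInstance (disjoint_iff.mpr hdisj) _ _
        hk₁ hy).symm.eq
    rwa [← conjCoeff_eq_one_iff eK, map_mul,
      (conjCoeff_eq_one_iff eK).mpr (le_centralizer_of_mulEquiv eK.toMulEquiv hk), one_mul]
      at hcomm
  have hs0 : toAdd (eT ⟨s, hs⟩) ≠ 0 := fun h => by
    have hs1 : s = 1 := by simpa using congrArg ofAdd h
    subst hs1
    have : k * 1 ∈ K₁ ⊓ K := ⟨hk₁, by simpa using hk⟩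
    exact hk₁1 (Subtype.ext (by rwa [hdisj] at this))
  let φ : Multiplicative ℤ_[p] →* ℤ_[p] :=
    (conjCoeff eK).comp (T.subtype.comp (eT.symm : Multiplicative ℤ_[p] →* T))
  have hφ : Continuous φ :=
    (continuous_conjCoeff eK).comp (continuous_subtype_val.comp eT.symm.continuous)
  refine ⟨(toAdd (eT ⟨s, hs⟩)).valuation, ?_⟩
  have := PadicInt.map_ofAdd_one_pow_eq_one φ hφ hs0 (by simpa [φ] using hcs)
  simpa [φ, ← ht] using this

theorem isTopIsoZpxZp_of_commute_s5 [T2Space N] {A B : Subgroup N}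
    (eA : A ≃ₜ* Multiplicative ℤ_[p]) (eB : B ≃ₜ* Multiplicative ℤ_[p])
    (hcomm : ∀ a ∈ A, ∀ b ∈ B, Commute a b) (hinf : A ⊓ B = ⊥)
    (hAB : ∀ n, ∃ a ∈ A, ∃ b ∈ B, n = a * b) : IsTopIsoZpxZp p N := by
  let f : Multiplicative ℤ_[p] × Multiplicative ℤ_[p] →* N :=
    (A.subtype.comp (eA.symm : Multiplicative ℤ_[p] →* A)).noncommCoprod
      (B.subtype.comp (eB.symm : Multiplicative ℤ_[p] →* B))
      fun x y => hcomm _ (eA.symm x).2 _ (eB.symm y).2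
  have hf : Continuous f :=
    ((continuous_subtype_val.comp eA.symm.continuous).comp continuous_fst).mul
      ((continuous_subtype_val.comp eB.symm.continuous).comp continuous_snd)
  have hfapp (x y) : f (x, y) = eA.symm x * eB.symm y := rfl
  have hinj : Function.Injective f := by
    refine (injective_iff_map_eq_one _).mpr fun ⟨x, y⟩ hxy => ?_
    rw [hfapp] at hxy
    have hx : (eA.symm x : N) = 1 := by
      have hmem : (eA.symm x : N) ∈ A ⊓ B := ⟨(eA.symm x).2, by
        rw [eq_inv_of_mul_eq_one_left hxy]; exact B.inv_mem (eB.symm y).2⟩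
      rwa [hinf, mem_bot] at hmem
    rw [hx, one_mul] at hxy
    simp only [OneMemClass.coe_eq_one, EmbeddingLike.map_eq_one_iff] at hx hxy
    exact Prod.ext hx hxy
  have hsurj : Function.Surjective f := fun n => by
    obtain ⟨a, ha, b, hb, rfl⟩ := hAB n
    exact ⟨(eA ⟨a, ha⟩, eB ⟨b, hb⟩), by simp [hfapp]⟩
  let e := ContinuousMulEquiv.ofBijectiveOfCompact f.toMulHom hf ⟨hinj, hsurj⟩
  exact ⟨e.symm.toMulEquiv, e.symm.continuous, e.continuous⟩

theorem isProKleinBottle_of_conjCoeff_eq_neg_one {K : Subgroup N} [K.Normal]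
    (hKcl : IsClosed (K : Set N)) (eK : K ≃ₜ* Multiplicative ℤ_[2]) {t : N}
    (eT : topGenBy t ≃ₜ* Multiplicative ℤ_[2]) (hinf : topGenBy t ⊓ K = ⊥)
    (hKT : ∀ n, ∃ k ∈ K, ∃ s ∈ topGenBy t, n = k * s) (h : conjCoeff eK t = -1) :
    IsProKleinBottle N := by
  set a : K := eK.symm (ofAdd 1)
  have hKa : topGenBy (a : N) = K := topGenBy_eq_of_continuousMulEquiv hKcl eK
  have hinv : conjCoeff eK t⁻¹ = -1 := by
    have : conjCoeff eK t⁻¹ * conjCoeff eK t = 1 := by rw [← map_mul, inv_mul_cancel, map_one]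
    linear_combination -this + conjCoeff eK t⁻¹ * h
  have hconj : MulAut.conjNormal t⁻¹ a = a⁻¹ := eK.injective (by
    rw [← ofAdd_toAdd (eK _), toAdd_conjNormal, hinv]
    simp [a])
  have hsup : K ⊔ topGenBy t = ⊤ := eq_top_iff.mpr fun n _ => by
    obtain ⟨k, hk, s, hs, rfl⟩ := hKT n
    exact mul_mem (mem_sup_left hk) (mem_sup_right hs)
  refine ⟨a, t, ?_, by rw [hKa]; infer_instance,
    by rw [hKa]; exact isTopIsoZp_iff.mpr ⟨eK⟩, isTopIsoZp_iff.mpr ⟨eT⟩,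
    by rw [hKa, inf_comm, hinf], ?_⟩
  · simpa using congrArg Subtype.val hconj
  · rw [hKa, hsup]
    exact eq_top_iff.mpr (le_topologicalClosure ⊤)

end Extension

theorem extension_is_abelian_or_klein_general
    (N : Type u) [Group N] [TopologicalSpace N] [IsTopologicalGroup N] (hN : IsProP 2 N)
    (K : Subgroup N) [K.Normal] (hKcl : IsClosed (K : Set N)) (hK : IsTopIsoZp 2 ↥K)
    (hQ : IsTopIsoZp 2 (N ⧸ K))
    (K₁ : Subgroup N) (hK₁n : K₁.Normal)
    (hK₁ : IsTopIsoZp 2 ↥K₁) (hdisj : K₁ ⊓ K = ⊥) :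
    IsTopIsoZpxZp 2 N ∨ IsProKleinBottle N := by
  have : CompactSpace N := hN.1
  have : T2Space N := hN.2.1
  obtain ⟨eK⟩ := isTopIsoZp_iff.mp hK
  obtain ⟨eQ⟩ := isTopIsoZp_iff.mp hQ
  obtain ⟨e₁, -, -⟩ := hK₁
  let π : N →* Multiplicative ℤ_[2] :=
    (eQ : N ⧸ K →* Multiplicative ℤ_[2]).comp (QuotientGroup.mk' K)
  have hπ : Continuous π := eQ.continuous.comp QuotientGroup.continuous_mk
  have hker (n : N) : π n = 1 ↔ n ∈ K := by simp [π]
  obtain ⟨t, ht⟩ := (eQ.surjective.comp (QuotientGroup.mk'_surjective K)) (ofAdd 1)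
  have hinf := topGenBy_inf_eq_bot ht hker eK eK.injective
  have hKT := exists_mem_mul_mem_topGenBy hπ ht hker
  obtain ⟨eT, heT⟩ := exists_continuousMulEquiv_topGenBy hπ ht hker hinf
  obtain ⟨v, hv⟩ := exists_conjCoeff_pow_eq_one eK eT (mem_topGenBy t) (by rw [heT]; exact ht)
    hKT hK₁n hdisj (ne_bot_iff_exists_ne_one.mpr ⟨e₁.symm (ofAdd 1), by simp⟩)
  rcases PadicInt.eq_one_or_eq_neg_one_of_pow_two_pow_eq_one hv with h | h
  · have hT := (topGenBy_le_centralizer_iff eK).mpr h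
    exact Or.inl (isTopIsoZpxZp_of_commute_s5 eK eT
      (fun a ha b hb => mem_centralizer_iff.mp (hT hb) a ha) (by rwa [inf_comm]) hKT)
  · exact Or.inr (isProKleinBottle_of_conjCoeff_eq_neg_one hKcl eK eT hinf hKT h)

/-- a pro-2 group `N` which is an extension of `ℤ₂` by `ℤ₂` and has a closed
normal subgroup `K₁ ≅ ℤ₂` with `K₁ ∩ K = 1` is isomorphic to `ℤ₂ × ℤ₂` or to the
pro-2 Klein bottle. -/
theorem extension_is_abelian_or_klein
    (N : Type u) [Group N] [TopologicalSpace N] [IsTopologicalGroup N] (hN : IsProP 2 N)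
    (K : Subgroup N) [K.Normal] (hKcl : IsClosed (K : Set N)) (hK : IsTopIsoZp 2 ↥K)
    (hQ : IsTopIsoZp 2 (N ⧸ K))
    (K₁ : Subgroup N) (hK₁cl : IsClosed (K₁ : Set N)) (hK₁n : K₁.Normal)
    (hK₁ : IsTopIsoZp 2 ↥K₁) (hdisj : K₁ ⊓ K = ⊥) :
    IsTopIsoZpxZp 2 N ∨ IsProKleinBottle N :=
  extension_is_abelian_or_klein_general N hN K hKcl hK hQ K₁ hK₁n hK₁ hdisj
end
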